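/- The group of permutations of the set of four augmented triads induced by Aut(S) is isomorphic to the dihedral group of order 8: the image of the group homomorphism from Aut(S) to the symmetric group on {C_aug, G_aug, D_aug, F_aug} sending (N, ν) to the restriction of ν to the augmented triads is a group of order 8 isomorphic to the dihedral group of order 8 (in particular it is a proper subgroup of the full symmetric group S₄). -/

import Mathlib

namespace CubeDance

/-- The set `X` of the 12 major triads, 12 minor triads, and 4 augmented triads. -/
inductive Triad : Type
  | maj : ZMod 12 → Triad
  | min : ZMod 12 → Triad
  | aug : ZMod 4 → Triad
  deriving DecidableEq

/-- Binary relations on `X`. -/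
abbrev RelM : Type := Triad → Triad → Prop

/-- Binary relations on `X` form a monoid under relational composition,
with identity the diagonal relation. -/
instance : Monoid RelM where
  mul R S := fun p q => ∃ r, R p r ∧ S r q
  one := fun p q => p = q
  mul_assoc R S T := by
    funext p q
    apply propext
    constructor
    · rintro ⟨r, ⟨s, h1, h2⟩, h3⟩
      exact ⟨s, h1, r, h2, h3⟩
    · rintro ⟨s, h1, r, h2, h3⟩
      exact ⟨r, ⟨s, h1, h2⟩, h3⟩
  one_mul R := by
    funext p q
    apply propext
    constructor
    · rintro ⟨r, rfl, h⟩
      exact h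
    · intro h
      exact ⟨p, rfl, h⟩
  mul_one R := by
    funext p q
    apply propext
    constructor
    · rintro ⟨r, h, rfl⟩
      exact h
    · intro h
      exact ⟨q, h, rfl⟩

/-- The relation `U`, relating `a_aug` with `x_M` whenever `x ≡ a (mod 4)` and
`a_aug` with `x_m` whenever `x ≡ a + 1 (mod 4)`. -/
def U : RelM := fun p q =>
  match p, q with
  | .aug a, .maj x => (x.val : ZMod 4) = a
  | .maj x, .aug a => (x.val : ZMod 4) = a
  | .aug a, .min x => (x.val : ZMod 4) = a + 1
  | .min x, .aug a => (x.val : ZMod 4) = a + 1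
  | _, _ => False

/-- The relation `P`, relating `x_M` with `x_m`, and each augmented triad with itself. -/
def P : RelM := fun p q =>
  match p, q with
  | .maj x, .min y => x = y
  | .min x, .maj y => x = y
  | .aug a, .aug b => a = b
  | _, _ => False

/-- The relation `L`, relating `x_M` with `(x+4)_m`, and each augmented triad with itself. -/
def L : RelM := fun p q =>
  match p, q with
  | .maj x, .min y => y = x + 4
  | .min y, .maj x => y = x + 4
  | .aug a, .aug b => a = b
  | _, _ => False

/-- The monoid `M_{U,P,L}` generated by the relations `U`, `P` and `L`. -/
def M : Submonoid RelM := Submonoid.closure {U, P, L}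

lemma U_mem : U ∈ M := Submonoid.subset_closure (Set.mem_insert _ _)

lemma P_mem : P ∈ M :=
  Submonoid.subset_closure (Set.mem_insert_of_mem _ (Set.mem_insert _ _))

lemma L_mem : L ∈ M :=
  Submonoid.subset_closure (Set.mem_insert_of_mem _ (Set.mem_insert_of_mem _ rfl))


/-- The compatibility condition defining `Aut(S)`: a pair `(N, ν)` of a monoid automorphism
of `M` and a permutation of `X` such that `p R q` implies `ν(p) N(R) ν(q)` for every
`R ∈ M` and all `p, q ∈ X`. -/
def compat (x : MulAut M × Equiv.Perm Triad) : Prop :=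
  ∀ R : M, ∀ pt q : Triad, (↑R : RelM) pt q → (↑(x.1 R) : RelM) (x.2 pt) (x.2 q)

/-!
Every relation in `M` commutes with transposition by a semitone, so it is determined by a mask on
the 36-point cover `Fin 3 × ZMod 12` of `X`, and composition of relations becomes convolution of
masks. Closing the masks of `U`, `P`, `L` under multiplication lists the 40 elements of `M`, and
two facts are read off that list: the identity is the only element relating some consonant triad to
itself alone, and an element relating `aug a` to `aug (a + 2)` also relates `aug a` to itself.

For `(N, ν) ∈ Aut(S)`, `N P` is an involution other than `1`, so by the first fact it fixes no
consonant triad; as `P` fixes the augmented triads, `ν` permutes them. The relation `U P U` joins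
`aug a` exactly to `aug (a ± 1)`, and with the second fact `ν` preserves the square
`aug 0 — aug 1 — aug 2 — aug 3`. All eight symmetries of the square occur, generated by
transposition and the inversion `x ↦ 1 - x` (with `N = 1`).
-/

end CubeDance

namespace DihedralGroup

def toPerm (n : ℕ) : DihedralGroup n →* Equiv.Perm (ZMod n) where
  toFun
    | r i => Equiv.addRight i
    | sr i => (Equiv.addRight i).trans (Equiv.neg _)
  map_one' := Equiv.ext add_zero
  map_mul' := by
    rintro (i | i) (j | j) <;> ext a <;>
      simp only [r_mul_r, r_mul_sr, sr_mul_r, sr_mul_sr, Equiv.Perm.mul_apply, Equiv.trans_apply,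
        Equiv.coe_addRight, Equiv.neg_apply] <;> ring

variable {n : ℕ}

lemma toPerm_injective (h2 : (2 : ZMod n) ≠ 0) : Function.Injective (toPerm n) := by
  rintro (i | i) (j | j) h <;>
    have h0 := DFunLike.congr_fun h 0 <;> have h1 := DFunLike.congr_fun h 1 <;>
    simp only [toPerm, MonoidHom.coe_mk, OneHom.coe_mk, Equiv.trans_apply, Equiv.coe_addRight,
      Equiv.neg_apply, zero_add] at h0 h1
  · rw [h0]
  · exact absurd (by linear_combination h1 - h0) h2
  · exact absurd (by linear_combination h0 - h1) h2
  · rw [neg_inj.1 h0]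

lemma mem_range_toPerm_of_adjacent [NeZero n] (h2 : (2 : ZMod n) ≠ 0) (σ : Equiv.Perm (ZMod n))
    (hσ : ∀ a, σ (a + 1) - σ a = 1 ∨ σ (a + 1) - σ a = -1) : σ ∈ (toPerm n).range := by
  -- two opposite steps in a row would give `σ (a + 2) = σ a`
  have hstep : ∀ a, σ (a + 1 + 1) - σ (a + 1) = σ (a + 1) - σ a := by
    intro a
    have hne : σ (a + 1 + 1) - σ a ≠ 0 :=
      sub_ne_zero.2 (σ.injective.ne (by rw [add_assoc, one_add_one_eq_two]; simpa using h2))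
    rcases hσ a with h | h <;> rcases hσ (a + 1) with h' | h' <;> rw [h, h'] <;>
      first | rfl | exact absurd (by linear_combination h' + h) hne
  have hconst : ∀ k : ℕ, σ (k + 1) - σ k = σ 1 - σ 0 := by
    intro k
    induction k with
    | zero => simp
    | succ k ih => push_cast; rw [hstep, ih]
  have hlin : ∀ k : ℕ, σ k = σ 0 + k * (σ 1 - σ 0) := by
    intro k
    induction k with
    | zero => simp
    | succ k ih => push_cast; linear_combination hconst k + ih
  have hσlin : ∀ a, σ a = σ 0 + a * (σ 1 - σ 0) := fun a => by
    simpa using hlin a.val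
  rcases hσ 0 with h | h <;> rw [zero_add] at h <;> rw [h] at hσlin
  · exact ⟨r (σ 0), Equiv.ext fun a => by simp [toPerm, hσlin a, add_comm]⟩
  · exact ⟨sr (-σ 0), Equiv.ext fun a => by simp [toPerm, hσlin a]⟩

end DihedralGroup

namespace CubeDance

lemma eq_of_mul_self_eq_one {R : RelM} (h : R * R = 1) {p q q' : Triad} (hq : R p q)
    (hq' : R p q') : q = q' := by
  obtain ⟨r, hpr, hrp⟩ : (R * R) p p := h ▸ rfl
  have hrq : (R * R) r q := ⟨p, hrp, hq⟩
  have hrq' : (R * R) r q' := ⟨p, hrp, hq'⟩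
  rw [h] at hrq hrq'
  exact hrq.symm.trans hrq'

instance : DecidableRel U := fun p q => by cases p <;> cases q <;> unfold U <;> infer_instance

instance : DecidableRel P := fun p q => by cases p <;> cases q <;> unfold P <;> infer_instance

instance : DecidableRel L := fun p q => by cases p <;> cases q <;> unfold L <;> infer_instance

/-- The 36-point cover `Fin 3 × ZMod 12 → X`; it covers each augmented triad three times. -/
def cover : Fin 3 → ZMod 12 → Triad
  | 0, x => .maj x
  | 1, x => .min x
  | 2, x => .aug (x.val : ZMod 4)

lemma cover_two_val (a : ZMod 4) : cover 2 (a.val : ZMod 12) = .aug a := by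
  revert a; decide

lemma cover_surjective (p : Triad) : ∃ i x, cover i x = p := by
  cases p with
  | maj x => exact ⟨0, x, rfl⟩
  | min x => exact ⟨1, x, rfl⟩
  | aug a => exact ⟨2, _, cover_two_val a⟩

lemma cover_eq_cover_iff {i : Fin 3} (hi : i ≠ 2) {j : Fin 3} {x y : ZMod 12} :
    cover j y = cover i x ↔ j = i ∧ y = x := by
  revert i j x y; decide

instance : Fintype Triad :=
  Fintype.ofSurjective (fun y : Fin 3 × ZMod 12 => cover y.1 y.2) fun p =>
    let ⟨i, x, h⟩ := cover_surjective p; ⟨(i, x), h⟩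

abbrev Mask : Type := Fin 3 → Fin 3 → ZMod 12 → Bool

/-- `R` is invariant under transposition, and `m i j d` records whether it relates the triads
over `(i, x)` and `(j, x + d)`. -/
def HasMask (R : RelM) (m : Mask) : Prop :=
  ∀ i j x y, R (cover i x) (cover j y) ↔ m i j (y - x) = true

def Mask.conv (m m' : Mask) : Mask :=
  fun i k d => decide (∃ j s, m i j s = true ∧ m' j k (d - s) = true)

lemma HasMask.mul {R S : RelM} {m m' : Mask} (hR : HasMask R m) (hS : HasMask S m') :
    HasMask (R * S) (m.conv m') := by
  intro i k x z
  simp only [Mask.conv, decide_eq_true_eq]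
  constructor
  · rintro ⟨r, hxr, hrz⟩
    obtain ⟨j, y, rfl⟩ := cover_surjective r
    exact ⟨j, y - x, (hR i j x y).1 hxr, by simpa using (hS j k y z).1 hrz⟩
  · rintro ⟨j, s, hs, hs'⟩
    refine ⟨cover j (x + s), (hR i j x _).2 (by simpa using hs), (hS j k _ z).2 ?_⟩
    rwa [sub_add_eq_sub_sub]

lemma HasMask.unique {R S : RelM} {m : Mask} (hR : HasMask R m) (hS : HasMask S m) : R = S := by
  funext p q
  obtain ⟨i, x, rfl⟩ := cover_surjective p
  obtain ⟨j, y, rfl⟩ := cover_surjective q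
  exact propext ((hR i j x y).trans (hS i j x y).symm)

def Mask.ofList (l : Fin 3 → List (Fin 3 × ZMod 12)) : Mask :=
  fun i j d => decide ((j, d) ∈ l i)

lemma Mask.ofList_conv (l : Fin 3 → List (Fin 3 × ZMod 12)) (m : Mask) :
    (Mask.ofList l).conv m = fun i k d => (l i).any fun js => m js.1 k (d - js.2) := by
  funext i k d
  rw [Bool.eq_iff_iff]
  simp [Mask.conv, Mask.ofList, List.any_eq_true]

def Mask.ofNat (n : ℕ) : Mask := fun i j d => n.testBit (36 * i + 12 * j + d.val)

def augLifts (j : Fin 3) (s : ZMod 12) : List (Fin 3 × ZMod 12) := [(j, s), (j, s + 4), (j, s + 8)]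

def oneRows : Fin 3 → List (Fin 3 × ZMod 12) := ![[(0, 0)], [(1, 0)], augLifts 2 0]

def uRows : Fin 3 → List (Fin 3 × ZMod 12) :=
  ![augLifts 2 0, augLifts 2 3, augLifts 0 0 ++ augLifts 1 1]

def pRows : Fin 3 → List (Fin 3 × ZMod 12) := ![[(1, 0)], [(0, 0)], augLifts 2 0]

def lRows : Fin 3 → List (Fin 3 × ZMod 12) := ![[(1, 4)], [(0, 8)], augLifts 2 0]

lemma hasMask_one : HasMask 1 (Mask.ofList oneRows) := by
  show ∀ i j x y, cover i x = cover j y ↔ _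
  decide +kernel

lemma hasMask_U : HasMask U (Mask.ofList uRows) := by
  unfold HasMask; decide +kernel

lemma hasMask_P : HasMask P (Mask.ofList pRows) := by
  unfold HasMask; decide +kernel

lemma hasMask_L : HasMask L (Mask.ofList lRows) := by
  unfold HasMask; decide +kernel

/-- The masks of the 40 elements of `M`, computed by closing `{1}` under left multiplication by
`U`, `P` and `L`. -/
def elementMasks : List ℕ := [
  5283166706923917855713918976, 5283167965914200895551176704, 5283168910156913127337230336,
  5283169539652054660996399104, 10562465480950794677687156736, 10562466739941077717524414464,
  10562467684183789949310468096, 10562468313678931482969636864, 26415832275629306101326938112,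
  26415833534619589141164195840, 26415834478862301372950249472, 26415835108357442906609418240,
  52812326145763690211193126912, 52812327404753973251030384640, 52812328348996685482816438272,
  52812328978491827016475607040, 21629288366394164163106217922560, 21629288366394164164137011118080,
  21629288366394164180629684551680, 21629288366394164444512475152385,
  21629288366394168666637125812480, 21629288366394236220631536369680,
  21629288366394241043226983694609, 21629288366394241155789479878929,
  21629288366394317867135200729224, 21629288366394548563984891159893,
  21629288366394778923147052782114, 21629288366394932683526009871018,
  108146441831970897695376977461521, 108146441831970897807939473645841,
  108146441831970974519285194496136, 108146441831971205216134884926805,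
  108146441831971435575297046549026, 108146441831971589335676003637930,
  216292883663941718510564469670161, 216292883663941718623126965854481,
  216292883663941795334472686704776, 216292883663942026031322377135445,
  216292883663942256390484538757666, 216292883663942410150863495846570]

lemma one_mem_elementMasks : ∃ n ∈ elementMasks, Mask.ofNat n = Mask.ofList oneRows := by
  decide +kernel

lemma elementMasks_closed :
    ∀ l ∈ [uRows, pRows, lRows], ∀ n ∈ elementMasks, ∃ n' ∈ elementMasks,
      ∀ i k d, ((l i).any fun js => Mask.ofNat n js.1 k (d - js.2)) = Mask.ofNat n' i k d := by
  decide +kernel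

lemma exists_hasMask_mul {g R : RelM} {l : Fin 3 → List (Fin 3 × ZMod 12)}
    (hg : HasMask g (Mask.ofList l)) (hl : l ∈ [uRows, pRows, lRows]) {n : ℕ}
    (hn : n ∈ elementMasks) (hR : HasMask R (Mask.ofNat n)) :
    ∃ n' ∈ elementMasks, HasMask (g * R) (Mask.ofNat n') := by
  obtain ⟨n', hn', h⟩ := elementMasks_closed l hl n hn
  refine ⟨n', hn', ?_⟩
  convert hg.mul hR using 1
  rw [Mask.ofList_conv]
  funext i k d
  exact (h i k d).symm

lemma exists_hasMask_of_mem {R : RelM} (hR : R ∈ M) :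
    ∃ n ∈ elementMasks, HasMask R (Mask.ofNat n) := by
  induction hR using Submonoid.closure_induction_left with
  | one =>
    obtain ⟨n, hn, h⟩ := one_mem_elementMasks
    exact ⟨n, hn, h ▸ hasMask_one⟩
  | mul_left g hg R _ ih =>
    obtain ⟨n, hn, hR⟩ := ih
    rcases hg with rfl | rfl | rfl
    · exact exists_hasMask_mul hasMask_U (by simp) hn hR
    · exact exists_hasMask_mul hasMask_P (by simp) hn hR
    · exact exists_hasMask_mul hasMask_L (by simp) hn hR

lemma elementMasks_eq_of_row_eq {i : Fin 3} (hi : i ≠ 2) :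
    ∀ n ∈ elementMasks, (∀ j d, Mask.ofNat n i j d = decide (j = i ∧ d = 0)) →
      Mask.ofNat n = Mask.ofList oneRows := by
  revert i; decide +kernel

lemma elementMasks_two_imp_zero : ∀ n ∈ elementMasks, Mask.ofNat n 2 2 2 = true →
    Mask.ofNat n 2 2 0 = true := by
  decide +kernel

lemma eq_one_of_rel_iff_eq {R : RelM} (hR : R ∈ M) {i : Fin 3} (hi : i ≠ 2) {x : ZMod 12}
    (hrow : ∀ q, R (cover i x) q ↔ q = cover i x) : R = 1 := by
  obtain ⟨n, hn, hmask⟩ := exists_hasMask_of_mem hR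
  have hrowmask : ∀ j d, Mask.ofNat n i j d = decide (j = i ∧ d = 0) := fun j d => by
    have h := hmask i j x (x + d)
    rw [add_sub_cancel_left, hrow, cover_eq_cover_iff hi, add_eq_left] at h
    rw [Bool.eq_iff_iff, ← h, decide_eq_true_iff]
  exact hmask.unique (elementMasks_eq_of_row_eq hi n hn hrowmask ▸ hasMask_one)

lemma exists_aug_of_mul_self_eq_one {R : RelM} (hR : R ∈ M) (h1 : R * R = 1) (hne : R ≠ 1)
    {p : Triad} (hp : R p p) : ∃ a, p = .aug a := by
  obtain ⟨i, x, rfl⟩ := cover_surjective p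
  by_cases hi : i = 2
  · subst hi
    exact ⟨_, rfl⟩
  · exact absurd (eq_one_of_rel_iff_eq hR hi fun q =>
      ⟨fun hq => eq_of_mul_self_eq_one h1 hq hp, fun hq => hq ▸ hp⟩) hne

lemma rel_aug_self_of_rel_aug_add_two {R : RelM} (hR : R ∈ M) {a : ZMod 4}
    (h : R (.aug a) (.aug (a + 2))) : R (.aug a) (.aug a) := by
  obtain ⟨n, hn, hmask⟩ := exists_hasMask_of_mem hR
  have hcover : ∀ b : ZMod 4, cover 2 ((b.val : ZMod 12) + 2) = .aug (b + 2) := by decide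
  rw [← cover_two_val, ← hcover, hmask, add_sub_cancel_left] at h
  rw [← cover_two_val, hmask, sub_self]
  exact elementMasks_two_imp_zero n hn h

def preserving (σ : Equiv.Perm Triad) : Submonoid RelM where
  carrier := {R | ∀ p q, R p q → R (σ p) (σ q)}
  one_mem' := fun _ _ h => congrArg σ h
  mul_mem' := fun hR hS _ _ ⟨r, hpr, hrq⟩ => ⟨σ r, hR _ _ hpr, hS _ _ hrq⟩

lemma mem_preserving {σ : Equiv.Perm Triad} {R : RelM} :
    R ∈ preserving σ ↔ ∀ p q, R p q → R (σ p) (σ q) :=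
  Iff.rfl

lemma M_le_preserving {σ : Equiv.Perm Triad} (hU : U ∈ preserving σ) (hP : P ∈ preserving σ)
    (hL : L ∈ preserving σ) : M ≤ preserving σ :=
  Submonoid.closure_le.2 (by rintro R (rfl | rfl | rfl) <;> assumption)

def transpose : Equiv.Perm Triad where
  toFun
    | .maj x => .maj (x + 1)
    | .min x => .min (x + 1)
    | .aug a => .aug (a + 1)
  invFun
    | .maj x => .maj (x - 1)
    | .min x => .min (x - 1)
    | .aug a => .aug (a - 1)
  left_inv p := by cases p <;> simp
  right_inv p := by cases p <;> simp

def invert : Equiv.Perm Triad :=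
  Function.Involutive.toPerm
    (fun
      | .maj x => .min (1 - x)
      | .min x => .maj (1 - x)
      | .aug a => .aug (-a))
    (by intro p; cases p <;> simp)

lemma M_le_preserving_transpose : M ≤ preserving transpose :=
  M_le_preserving (mem_preserving.2 (by decide)) (mem_preserving.2 (by decide))
    (mem_preserving.2 (by decide))

lemma M_le_preserving_invert : M ≤ preserving invert :=
  M_le_preserving (mem_preserving.2 (by decide)) (mem_preserving.2 (by decide))
    (mem_preserving.2 (by decide))

def autS : Subgroup (MulAut M × Equiv.Perm Triad) where
  carrier := {x | compat x}
  one_mem' := fun _ _ _ h => h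
  mul_mem' := fun hx hy R _ _ h => hx _ _ _ (hy R _ _ h)
  -- in a finite group `x⁻¹` is a power of `x`
  inv_mem' := fun {x} hx => by
    obtain ⟨k, hk : x ^ k = x⁻¹⟩ :=
      mem_powers_iff_mem_zpowers.2 (Subgroup.inv_mem _ (Subgroup.mem_zpowers x))
    rw [← hk]
    clear hk
    induction k with
    | zero => exact fun _ _ _ h => h
    | succ k ih => rw [pow_succ]; exact fun R _ _ h => ih _ _ _ (hx R _ _ h)

lemma P_mul_self : P * P = 1 := by
  funext p q
  exact propext (show (∃ r, P p r ∧ P r q) ↔ p = q by revert p q; decide)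

lemma P_ne_one : P ≠ 1 := fun h => by
  have hP : P (.maj 0) (.maj 0) := by rw [h]; rfl
  exact hP

def augIndex : Triad → ZMod 4
  | .aug a => a
  | _ => 0

namespace autS

variable (x : autS)

lemma rel_iff (R : M) (p q : Triad) :
    (R : RelM) p q ↔ (x.1.1 R : RelM) (x.1.2 p) (x.1.2 q) := by
  refine ⟨x.2 R p q, fun h => ?_⟩
  simpa using (inv_mem x.2 : x.1⁻¹ ∈ autS) _ _ _ h

/-- `N P` is an involution other than `1`, and those fix no consonant triad. -/
lemma apply_aug (a : ZMod 4) : x.1.2 (.aug a) = .aug (augIndex (x.1.2 (.aug a))) := by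
  let Pm : M := ⟨P, P_mem⟩
  have hPm : Pm * Pm = 1 := Subtype.ext P_mul_self
  have hsq : (x.1.1 Pm : RelM) * x.1.1 Pm = 1 := by
    rw [← Submonoid.coe_mul, ← map_mul, hPm, map_one]
    rfl
  have hne : (x.1.1 Pm : RelM) ≠ 1 := fun h =>
    P_ne_one (congrArg Subtype.val ((map_eq_one_iff _ x.1.1.injective).1 (Subtype.ext h)))
  obtain ⟨b, hb⟩ := exists_aug_of_mul_self_eq_one (x.1.1 Pm).2 hsq hne
    (x.2 Pm (.aug a) (.aug a) rfl)
  rw [hb]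
  rfl

end autS

def augPerm : autS →* Equiv.Perm (ZMod 4) where
  toFun x :=
    { toFun := fun a => augIndex (x.1.2 (.aug a))
      invFun := fun a => augIndex (x⁻¹.1.2 (.aug a))
      left_inv := fun a => by
        dsimp only
        rw [← autS.apply_aug x a]
        simp [augIndex]
      right_inv := fun a => by
        dsimp only
        rw [← autS.apply_aug x⁻¹ a]
        simp [augIndex] }
  map_one' := rfl
  map_mul' x y := Equiv.ext fun a => by
    show augIndex (x.1.2 (y.1.2 (.aug a))) = augIndex (x.1.2 (.aug (augIndex (y.1.2 (.aug a)))))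
    rw [← autS.apply_aug y a]

lemma apply_aug_eq_augPerm (x : autS) (a : ZMod 4) : x.1.2 (.aug a) = .aug (augPerm x a) :=
  autS.apply_aug x a

lemma UPU_aug_iff (a b : ZMod 4) : (U * P * U) (.aug a) (.aug b) ↔ b = a + 1 ∨ b = a - 1 := by
  show (∃ r, (∃ s, U (.aug a) s ∧ P s r) ∧ U r (.aug b)) ↔ _
  revert a b
  decide

/-- `N (U P U)` joins `ν aug a` to `ν aug (a + 1)`. Their difference is neither `0` (`ν` is
injective) nor `2`: otherwise `N (U P U)` would relate `ν aug a` to itself, and so would `U P U`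
relate `aug a` to itself. -/
lemma augPerm_adjacent (x : autS) (a : ZMod 4) :
    augPerm x (a + 1) - augPerm x a = 1 ∨ augPerm x (a + 1) - augPerm x a = -1 := by
  let R : M := ⟨U, U_mem⟩ * ⟨P, P_mem⟩ * ⟨U, U_mem⟩
  have hR (b c : ZMod 4) : (U * P * U) (.aug b) (.aug c) ↔
      (x.1.1 R : RelM) (.aug (augPerm x b)) (.aug (augPerm x c)) := by
    rw [← apply_aug_eq_augPerm, ← apply_aug_eq_augPerm]
    exact autS.rel_iff x R _ _
  have hsucc := (hR a (a + 1)).1 ((UPU_aug_iff a _).2 (Or.inl rfl))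
  have hne0 : augPerm x (a + 1) - augPerm x a ≠ 0 :=
    sub_ne_zero.2 ((augPerm x).injective.ne (add_ne_left.2 (by decide)))
  have hne2 : augPerm x (a + 1) - augPerm x a ≠ 2 := fun h2 => by
    rw [sub_eq_iff_eq_add'] at h2
    rw [h2] at hsucc
    have hself := (hR a a).2 (rel_aug_self_of_rel_aug_add_two (x.1.1 R).2 hsucc)
    have hnot : ∀ b : ZMod 4, ¬ (b = b + 1 ∨ b = b - 1) := by decide
    exact hnot a ((UPU_aug_iff a a).1 hself)
  generalize augPerm x (a + 1) - augPerm x a = d at hne0 hne2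
  revert d
  decide

open DihedralGroup

def transposeAut : autS := ⟨(1, transpose), fun R _ _ h => M_le_preserving_transpose R.2 _ _ h⟩

def invertAut : autS := ⟨(1, invert), fun R _ _ h => M_le_preserving_invert R.2 _ _ h⟩

lemma augPerm_transposeAut : augPerm transposeAut = toPerm 4 (r 1) := Equiv.ext fun _ => rfl

lemma augPerm_invertAut : augPerm invertAut = toPerm 4 (sr 0) :=
  Equiv.ext fun a => congrArg Neg.neg (add_zero a).symm

lemma range_augPerm : augPerm.range = (toPerm 4).range := by
  refine le_antisymm ?_ ?_
  · rintro _ ⟨x, rfl⟩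
    exact mem_range_toPerm_of_adjacent (by decide) _ (augPerm_adjacent x)
  · rintro _ ⟨d, rfl⟩
    have hr (i : ZMod 4) : toPerm 4 (r i) = augPerm (transposeAut ^ i.val) := by
      rw [map_pow, augPerm_transposeAut, ← map_pow, r_one_pow, ZMod.natCast_zmod_val]
    cases d with
    | r i => exact ⟨_, (hr i).symm⟩
    | sr i =>
      refine ⟨invertAut * transposeAut ^ i.val, ?_⟩
      rw [map_mul, ← hr, augPerm_invertAut, ← map_mul, sr_mul_r, zero_add]

/-- The group of permutations of the four augmented triads induced by `Aut(S)` is a group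
of order 8 isomorphic to the dihedral group of order 8, a proper subgroup of `S₄`. -/
theorem autS_induced_on_aug :
    ∃ H : Subgroup (MulAut M × Equiv.Perm Triad),
      (∀ x, x ∈ H ↔ compat x) ∧
      ∃ f : H →* Equiv.Perm (ZMod 4),
        (∀ x : H, ∀ a : ZMod 4, (x : MulAut M × Equiv.Perm Triad).2 (Triad.aug a) =
          Triad.aug (f x a)) ∧
        Nat.card f.range = 8 ∧ f.range ≠ ⊤ ∧ Nonempty (f.range ≃* DihedralGroup 4) := by
  let e : augPerm.range ≃* DihedralGroup 4 :=
    (MulEquiv.subgroupCongr range_augPerm).trans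
      (MonoidHom.ofInjective (toPerm_injective (by decide))).symm
  have hcard : Nat.card augPerm.range = 8 := (Nat.card_congr e.toEquiv).trans nat_card
  refine ⟨autS, fun _ => Iff.rfl, augPerm, apply_aug_eq_augPerm, hcard, fun htop => ?_, ⟨e⟩⟩
  rw [htop, Subgroup.card_top, Nat.card_perm, Nat.card_zmod] at hcard
  exact absurd hcard (by decide)

end CubeDance
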